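/- Let F denote the space of trilinear forms on V alternating and semi-basic in the last two arguments, let Λ³_v denote the space of alternating trilinear forms on V semi-basic in every argument, and for a linear map K : V → V let (τ_K C)(X,Y,Z) = C(KX,Y,Z) − C(KY,X,Z) + C(KZ,X,Y). Define τ : F ⊕ F → Λ³_v ⊕ Λ³_v ⊕ Λ³_v by τ(C₁, C₂) = (τ_J C₁, τ_h C₂, τ_h C₁ + τ_J C₂). Then τ is surjective. -/

import Mathlib

open Module

/-- Model of the tangent space of `J¹π` at a point: `V = ℝ^{n+1} × ℝ^n`, the first
factor spanned by the horizontal vectors `e_0, …, e_n` (`e_0` the time direction),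
the second by the vertical vectors `f_1, …, f_n` (here `f_k = fbase ⟨k-1,_⟩`). -/
abbrev Vv (n : ℕ) : Type := (Fin (n + 1) → ℝ) × (Fin n → ℝ)

/-- A vector of `V` is vertical if it lies in the span of `f_1, …, f_n`,
i.e. its first component vanishes. -/
def IsVert {n : ℕ} (v : Vv n) : Prop := v.1 = 0

/-- The vertical endomorphism `J : V → V`: `J e_0 = 0`, `J e_i = f_i` (1 ≤ i ≤ n),
`J f_i = 0`. -/
noncomputable def Jv (n : ℕ) : Vv n →ₗ[ℝ] Vv n :=
  LinearMap.prod 0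
    ((LinearMap.funLeft ℝ ℝ Fin.succ).comp (LinearMap.fst ℝ (Fin (n + 1) → ℝ) (Fin n → ℝ)))

/-- The horizontal projector `h : V → V`: `h e_α = e_α` (0 ≤ α ≤ n), `h f_i = 0`. -/
noncomputable def Hv (n : ℕ) : Vv n →ₗ[ℝ] Vv n :=
  LinearMap.prod (LinearMap.fst ℝ (Fin (n + 1) → ℝ) (Fin n → ℝ)) 0

set_option maxSynthPendingDepth 3
set_option synthInstance.maxHeartbeats 400000

/-- `F`: the space of trilinear forms on `V` that are alternating in the last two
arguments and semi-basic in the last two arguments (model of `T* ⊗ Λ²T_v*`). -/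
noncomputable def Fsub (n : ℕ) : Submodule ℝ (Vv n →ₗ[ℝ] Vv n →ₗ[ℝ] Vv n →ₗ[ℝ] ℝ) where
  carrier := { C | (∀ X Y Z, C X Y Z = - C X Z Y) ∧
    (∀ X v Z, IsVert v → C X v Z = 0) ∧
    (∀ X Y v, IsVert v → C X Y v = 0) }
  add_mem' := by
    rintro A B ⟨a1, a2, a3⟩ ⟨b1, b2, b3⟩
    refine ⟨fun X Y Z => ?_, fun X v Z hv => ?_, fun X Y v hv => ?_⟩
    · simp only [LinearMap.add_apply]; rw [a1, b1]; ring
    · simp [a2 X v Z hv, b2 X v Z hv]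
    · simp [a3 X Y v hv, b3 X Y v hv]
  zero_mem' := by
    refine ⟨fun X Y Z => ?_, fun X v Z hv => ?_, fun X Y v hv => ?_⟩ <;> simp
  smul_mem' := by
    rintro c A ⟨a1, a2, a3⟩
    refine ⟨fun X Y Z => ?_, fun X v Z hv => ?_, fun X Y v hv => ?_⟩
    · simp only [LinearMap.smul_apply, smul_eq_mul]; rw [a1]; ring
    · simp [a2 X v Z hv]
    · simp [a3 X Y v hv]

/-- `Λ³T_v*`: the space of alternating trilinear forms on `V` that are semi-basic in
every argument. -/
noncomputable def Lv3 (n : ℕ) : Submodule ℝ (Vv n →ₗ[ℝ] Vv n →ₗ[ℝ] Vv n →ₗ[ℝ] ℝ) where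
  carrier := { D | (∀ X Y Z, D X Y Z = - D Y X Z) ∧
    (∀ X Y Z, D X Y Z = - D X Z Y) ∧
    (∀ v Y Z, IsVert v → D v Y Z = 0) ∧
    (∀ X v Z, IsVert v → D X v Z = 0) ∧
    (∀ X Y v, IsVert v → D X Y v = 0) }
  add_mem' := by
    rintro A B ⟨a1, a2, a3, a4, a5⟩ ⟨b1, b2, b3, b4, b5⟩
    refine ⟨fun X Y Z => ?_, fun X Y Z => ?_, fun v Y Z hv => ?_, fun X v Z hv => ?_,
      fun X Y v hv => ?_⟩
    · simp only [LinearMap.add_apply]; rw [a1, b1]; ring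
    · simp only [LinearMap.add_apply]; rw [a2, b2]; ring
    · simp [a3 v Y Z hv, b3 v Y Z hv]
    · simp [a4 X v Z hv, b4 X v Z hv]
    · simp [a5 X Y v hv, b5 X Y v hv]
  zero_mem' := by
    refine ⟨fun X Y Z => ?_, fun X Y Z => ?_, fun v Y Z hv => ?_, fun X v Z hv => ?_,
      fun X Y v hv => ?_⟩ <;> simp
  smul_mem' := by
    rintro c A ⟨a1, a2, a3, a4, a5⟩
    refine ⟨fun X Y Z => ?_, fun X Y Z => ?_, fun v Y Z hv => ?_, fun X v Z hv => ?_,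
      fun X Y v hv => ?_⟩
    · simp only [LinearMap.smul_apply, smul_eq_mul]; rw [a1]; ring
    · simp only [LinearMap.smul_apply, smul_eq_mul]; rw [a2]; ring
    · simp [a3 v Y Z hv]
    · simp [a4 X v Z hv]
    · simp [a5 X Y v hv]

/-- The alternating operator `τ_K`:
`(τ_K C)(X,Y,Z) = C(KX,Y,Z) − C(KY,X,Z) + C(KZ,X,Y)`. -/
noncomputable def tauF (n : ℕ) (K : Vv n →ₗ[ℝ] Vv n)
    (C : Vv n →ₗ[ℝ] Vv n →ₗ[ℝ] Vv n →ₗ[ℝ] ℝ) : Vv n → Vv n → Vv n → ℝ :=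
  fun X Y Z => C (K X) Y Z - C (K Y) X Z + C (K Z) X Y

/-!
For `D ∈ Λ³_v` the form `C = ⅓ D(hX, Y, Z)` lies in `F`, satisfies `τ_h C = D` because `h` is
a projector and `D` is alternating and semi-basic, and satisfies `τ_J C = 0` because `hJ = 0`.
So `τ` is triangular: it suffices to find `C₀ ∈ F` with `τ_J C₀ = D₁`, and then
`C₁ = C₀ + ⅓ (D₃ - τ_h C₀) ∘ h`, `C₂ = ⅓ D₂ ∘ h` work. A preimage under `τ_J` comes from undoing
`J` with `ι = vertToHoriz : f_i ↦ e_i`, which satisfies `ι J = h - θ ⊗ e₀` for the time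
coordinate `θ`.
-/

section Precomposition

variable {R M N : Type*} [CommSemiring R] [AddCommMonoid M] [Module R M]
  [AddCommMonoid N] [Module R N]

def LinearMap.precomp₃ (D : N →ₗ[R] N →ₗ[R] N →ₗ[R] R) (K L P : M →ₗ[R] N) :
    M →ₗ[R] M →ₗ[R] M →ₗ[R] R :=
  (D.compl₁₂ K L).compr₂ (LinearMap.lcomp R R P)

@[simp]
theorem LinearMap.precomp₃_apply (D : N →ₗ[R] N →ₗ[R] N →ₗ[R] R) (K L P : M →ₗ[R] N)
    (X Y Z : M) : D.precomp₃ K L P X Y Z = D (K X) (L Y) (P Z) :=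
  rfl

end Precomposition

variable {n : ℕ}

theorem tauF_add (K : Vv n →ₗ[ℝ] Vv n) (C C' : Vv n →ₗ[ℝ] Vv n →ₗ[ℝ] Vv n →ₗ[ℝ] ℝ)
    (X Y Z : Vv n) : tauF n K (C + C') X Y Z = tauF n K C X Y Z + tauF n K C' X Y Z := by
  simp only [tauF, LinearMap.add_apply]
  ring

theorem Hv_Jv (X : Vv n) : Hv n (Jv n X) = 0 := rfl

theorem Hv_Hv (X : Vv n) : Hv n (Hv n X) = Hv n X := rfl

theorem isVert_sub_Hv (X : Vv n) : IsVert (X - Hv n X) := by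
  simp [IsVert, Hv]

theorem Hv_eq_zero_of_isVert {v : Vv n} (hv : IsVert v) : Hv n v = 0 :=
  Prod.ext hv rfl

namespace Lv3

variable {D : Vv n →ₗ[ℝ] Vv n →ₗ[ℝ] Vv n →ₗ[ℝ] ℝ}

theorem apply_Hv_left (hD : D ∈ Lv3 n) (X Y Z : Vv n) : D (Hv n X) Y Z = D X Y Z := by
  have h := hD.2.2.1 _ Y Z (isVert_sub_Hv X)
  rwa [map_sub, LinearMap.sub_apply, LinearMap.sub_apply, sub_eq_zero, eq_comm] at h

theorem apply_self_left (hD : D ∈ Lv3 n) (X Z : Vv n) : D X X Z = 0 := by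
  linarith [hD.1 X X Z]

theorem apply_self_right (hD : D ∈ Lv3 n) (X Y : Vv n) : D X Y Y = 0 := by
  linarith [hD.2.1 X Y Y]

theorem apply_rotate (hD : D ∈ Lv3 n) (X Y Z : Vv n) : D X Y Z = D Y Z X := by
  linarith [hD.1 X Y Z, hD.2.1 Y X Z]

theorem tauF_Hv (hD : D ∈ Lv3 n) (X Y Z : Vv n) : tauF n (Hv n) D X Y Z = 3 * D X Y Z := by
  simp only [tauF, apply_Hv_left hD]
  linarith [hD.1 X Y Z, hD.1 Z X Y, hD.2.1 X Z Y]

theorem precomp₃_mem_Fsub (hD : D ∈ Lv3 n) (K L : Vv n →ₗ[ℝ] Vv n)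
    (hL : ∀ v, IsVert v → IsVert (L v)) : D.precomp₃ K L L ∈ Fsub n :=
  ⟨fun _ _ _ => hD.2.1 _ _ _, fun _ v _ hv => hD.2.2.2.1 _ _ _ (hL v hv),
    fun _ _ v hv => hD.2.2.2.2 _ _ _ (hL v hv)⟩

end Lv3

def tauL (K : Vv n →ₗ[ℝ] Vv n) (C : Vv n →ₗ[ℝ] Vv n →ₗ[ℝ] Vv n →ₗ[ℝ] ℝ) :
    Vv n →ₗ[ℝ] Vv n →ₗ[ℝ] Vv n →ₗ[ℝ] ℝ :=
  C.comp K - (C.comp K).flip + LinearMap.lflip.comp (C.comp K).flip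

theorem tauL_apply (K : Vv n →ₗ[ℝ] Vv n) (C : Vv n →ₗ[ℝ] Vv n →ₗ[ℝ] Vv n →ₗ[ℝ] ℝ)
    (X Y Z : Vv n) : tauL K C X Y Z = tauF n K C X Y Z :=
  rfl

theorem tauL_Hv_mem_Lv3 {C : Vv n →ₗ[ℝ] Vv n →ₗ[ℝ] Vv n →ₗ[ℝ] ℝ} (hC : C ∈ Fsub n) :
    tauL (Hv n) C ∈ Lv3 n := by
  obtain ⟨hswap, hvert₂, hvert₃⟩ := hC
  refine ⟨fun X Y Z => ?_, fun X Y Z => ?_, fun v Y Z hv => ?_, fun X v Z hv => ?_,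
    fun X Y v hv => ?_⟩ <;> simp only [tauL_apply, tauF]
  · linarith [hswap (Hv n Z) X Y]
  · linarith [hswap (Hv n X) Y Z]
  · simp [Hv_eq_zero_of_isVert hv, hvert₂ _ v _ hv]
  · simp [Hv_eq_zero_of_isVert hv, hvert₂ _ v _ hv, hvert₃ _ _ v hv]
  · simp [Hv_eq_zero_of_isVert hv, hvert₃ _ _ v hv]

section HorizontalPreimage

noncomputable def hPreimage (D : Vv n →ₗ[ℝ] Vv n →ₗ[ℝ] Vv n →ₗ[ℝ] ℝ) :
    Vv n →ₗ[ℝ] Vv n →ₗ[ℝ] Vv n →ₗ[ℝ] ℝ :=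
  (3⁻¹ : ℝ) • D.precomp₃ (Hv n) LinearMap.id LinearMap.id

variable {D : Vv n →ₗ[ℝ] Vv n →ₗ[ℝ] Vv n →ₗ[ℝ] ℝ}

theorem hPreimage_mem_Fsub (hD : D ∈ Lv3 n) : hPreimage D ∈ Fsub n :=
  Submodule.smul_mem _ _ (Lv3.precomp₃_mem_Fsub hD _ _ fun _ hv => hv)

theorem tauF_Hv_hPreimage (hD : D ∈ Lv3 n) (X Y Z : Vv n) :
    tauF n (Hv n) (hPreimage D) X Y Z = D X Y Z := by
  have h := Lv3.tauF_Hv hD X Y Z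
  simp only [tauF] at h
  simp only [tauF, hPreimage, LinearMap.smul_apply, LinearMap.precomp₃_apply, LinearMap.id_apply,
    Hv_Hv, smul_eq_mul]
  linarith

theorem tauF_Jv_hPreimage (X Y Z : Vv n) : tauF n (Jv n) (hPreimage D) X Y Z = 0 := by
  simp [tauF, hPreimage, Hv_Jv]

end HorizontalPreimage

section VerticalPreimage

noncomputable def timeCoord (n : ℕ) : Vv n →ₗ[ℝ] ℝ :=
  (LinearMap.proj 0).comp (LinearMap.fst ℝ _ _)

noncomputable def timeVec (n : ℕ) : Vv n := (Pi.single 0 1, 0)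

noncomputable def vertToHoriz (n : ℕ) : Vv n →ₗ[ℝ] Vv n :=
  ((LinearMap.vecCons 0 LinearMap.id).comp (LinearMap.snd ℝ _ _)).prod 0

noncomputable def timeStretch (n : ℕ) : Vv n →ₗ[ℝ] Vv n :=
  LinearMap.id + (2⁻¹ : ℝ) • (timeCoord n).smulRight (timeVec n)

theorem vertToHoriz_Jv (X : Vv n) :
    vertToHoriz n (Jv n X) = Hv n X - timeCoord n X • timeVec n := by
  refine Prod.ext (funext fun i => Fin.cases ?_ (fun j => ?_) i) ?_ <;>
    simp [vertToHoriz, Jv, Hv, timeCoord, timeVec]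

theorem timeStretch_apply (X : Vv n) :
    timeStretch n X = X + (2⁻¹ * timeCoord n X) • timeVec n := by
  simp [timeStretch, mul_smul]

theorem isVert_timeStretch {v : Vv n} (hv : IsVert v) : IsVert (timeStretch n v) := by
  have h : v.1 = 0 := hv
  simp [IsVert, timeStretch, timeCoord, h]

/-- In `τ_J C` a component of `D` with a time index is met by only two of the three terms,
since `J e₀ = 0`; it therefore needs weight `1/2` rather than `1/3`, which `timeStretch`
supplies as the factor `3/2` on `e₀`. -/
noncomputable def jPreimage (D : Vv n →ₗ[ℝ] Vv n →ₗ[ℝ] Vv n →ₗ[ℝ] ℝ) :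
    Vv n →ₗ[ℝ] Vv n →ₗ[ℝ] Vv n →ₗ[ℝ] ℝ :=
  (3⁻¹ : ℝ) • D.precomp₃ (vertToHoriz n) (timeStretch n) (timeStretch n)

variable {D : Vv n →ₗ[ℝ] Vv n →ₗ[ℝ] Vv n →ₗ[ℝ] ℝ}

theorem jPreimage_mem_Fsub (hD : D ∈ Lv3 n) : jPreimage D ∈ Fsub n :=
  Submodule.smul_mem _ _ (Lv3.precomp₃_mem_Fsub hD _ _ fun _ => isVert_timeStretch)

theorem three_mul_jPreimage_Jv (hD : D ∈ Lv3 n) (X Y Z : Vv n) :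
    3 * jPreimage D (Jv n X) Y Z = D X Y Z - timeCoord n X * D (timeVec n) Y Z
      + 2⁻¹ * timeCoord n Y * D X (timeVec n) Z + 2⁻¹ * timeCoord n Z * D X Y (timeVec n) := by
  simp only [jPreimage, LinearMap.smul_apply, LinearMap.precomp₃_apply, vertToHoriz_Jv,
    timeStretch_apply, map_add, map_sub, map_smul, LinearMap.add_apply, LinearMap.sub_apply,
    LinearMap.smul_apply, smul_eq_mul, Lv3.apply_Hv_left hD, Lv3.apply_self_left hD,
    Lv3.apply_self_right hD]
  have h : D (timeVec n) Y (timeVec n) = 0 := by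
    rw [hD.2.1, Lv3.apply_self_left hD, neg_zero]
  rw [h]
  ring

theorem tauF_Jv_jPreimage (hD : D ∈ Lv3 n) (X Y Z : Vv n) :
    tauF n (Jv n) (jPreimage D) X Y Z = D X Y Z := by
  have hX := three_mul_jPreimage_Jv hD X Y Z
  have hY := three_mul_jPreimage_Jv hD Y X Z
  have hZ := three_mul_jPreimage_Jv hD Z X Y
  have h₂ : ∀ A B, D A (timeVec n) B = -D (timeVec n) A B := fun A B => hD.1 _ _ _
  have h₃ : ∀ A B, D A B (timeVec n) = D (timeVec n) A B := fun A B =>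
    (Lv3.apply_rotate hD _ _ _).symm
  simp only [h₂, h₃, hD.1 Y X Z, Lv3.apply_rotate hD Z X Y, hD.2.1 (timeVec n) Z Y,
    hD.2.1 (timeVec n) Z X, hD.2.1 (timeVec n) Y X] at hX hY hZ
  simp only [tauF]
  linear_combination (hX - hY + hZ) / 3

end VerticalPreimage

theorem stmt6_general (n : ℕ) :
    ∀ D₁ ∈ Lv3 n, ∀ D₂ ∈ Lv3 n, ∀ D₃ ∈ Lv3 n,
      ∃ C₁ ∈ Fsub n, ∃ C₂ ∈ Fsub n,
        (∀ X Y Z, tauF n (Jv n) C₁ X Y Z = D₁ X Y Z) ∧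
        (∀ X Y Z, tauF n (Hv n) C₂ X Y Z = D₂ X Y Z) ∧
        (∀ X Y Z, tauF n (Hv n) C₁ X Y Z + tauF n (Jv n) C₂ X Y Z = D₃ X Y Z) := by
  intro D₁ hD₁ D₂ hD₂ D₃ hD₃
  have hC₀ := jPreimage_mem_Fsub hD₁
  have hD' : D₃ - tauL (Hv n) (jPreimage D₁) ∈ Lv3 n := sub_mem hD₃ (tauL_Hv_mem_Lv3 hC₀)
  refine ⟨jPreimage D₁ + hPreimage (D₃ - tauL (Hv n) (jPreimage D₁)),
    add_mem hC₀ (hPreimage_mem_Fsub hD'), hPreimage D₂, hPreimage_mem_Fsub hD₂,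
    fun X Y Z => ?_, tauF_Hv_hPreimage hD₂, fun X Y Z => ?_⟩
  · rw [tauF_add, tauF_Jv_jPreimage hD₁, tauF_Jv_hPreimage, add_zero]
  · rw [tauF_add, tauF_Hv_hPreimage hD', tauF_Jv_hPreimage, LinearMap.sub_apply,
      LinearMap.sub_apply, LinearMap.sub_apply, tauL_apply]
    ring

/-- The map `τ : F ⊕ F → Λ³T_v* ⊕ Λ³T_v* ⊕ Λ³T_v*`,
`τ(C₁, C₂) = (τ_J C₁, τ_h C₂, τ_h C₁ + τ_J C₂)`, is surjective. -/
theorem stmt6 (n : ℕ) (hn : 1 ≤ n) :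
    ∀ D₁ ∈ Lv3 n, ∀ D₂ ∈ Lv3 n, ∀ D₃ ∈ Lv3 n,
      ∃ C₁ ∈ Fsub n, ∃ C₂ ∈ Fsub n,
        (∀ X Y Z, tauF n (Jv n) C₁ X Y Z = D₁ X Y Z) ∧
        (∀ X Y Z, tauF n (Hv n) C₂ X Y Z = D₂ X Y Z) ∧
        (∀ X Y Z, tauF n (Hv n) C₁ X Y Z + tauF n (Jv n) C₂ X Y Z = D₃ X Y Z) :=
  stmt6_general n
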